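/- Let c₁,…,c_n ∈ ℝⁿ and d₁,…,d_m ∈ ℝ^m. Let Ũ be the mn×mn block-diagonal matrix with blocks Ũ^(1),…,Ũ^(m), where each Ũ^(k) ∈ ℝ^{n×n} is symmetric with zero diagonal. Define ℍ₀^(k) = Σ_{i≠j} Ũ^(k)_{ij} c_i c_jᵀ, and for w ∈ ℝ^{mn} let 𝔻₀(w) be the mn×mn block-diagonal matrix whose k-th n×n block has entries 𝔻₀^(k)_{ij}(w) = wᵀ((c_i c_jᵀ) ⊗ (d_k d_kᵀ))w. Then ‖Σ_{k=1}^m ℍ₀^(k) ⊗ d_k d_kᵀ‖₂ = sup_{w ∈ S^{mn−1}} |⟨Ũ, 𝔻₀(w)⟩| ≤ ‖Ũ‖₂ · sup_{w ∈ S^{mn−1}} ‖𝔻₀(w)‖_*. -/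

import Mathlib

open MeasureTheory Matrix Finset
open scoped Kronecker

/-- Euclidean (ℓ₂) norm of a vector. -/
noncomputable def e2 {ι : Type*} [Fintype ι] (v : ι → ℝ) : ℝ :=
  Real.sqrt (∑ i, v i ^ 2)

/-- Operator (spectral) norm of a matrix. -/
noncomputable def opNorm {α β : Type*} [Fintype α] [Fintype β]
    (M : Matrix α β ℝ) : ℝ :=
  sSup {r | ∃ q : β → ℝ, e2 q ≤ 1 ∧ r = e2 (M.mulVec q)}

/-- Nuclear (trace) norm of a real square matrix: `‖M‖_* = tr √(MᵀM)`. -/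
noncomputable def nucNorm {ι : Type*} [Fintype ι] [DecidableEq ι]
    (M : Matrix ι ι ℝ) : ℝ :=
  ((Matrix.posSemidef_conjTranspose_mul_self M).1.eigenvectorUnitary.1 *
    Matrix.diagonal ((RCLike.ofReal : ℝ → ℝ) ∘ (Real.sqrt ·) ∘ (Matrix.posSemidef_conjTranspose_mul_self M).1.eigenvalues) *
    (star (Matrix.posSemidef_conjTranspose_mul_self M).1.eigenvectorUnitary : Matrix ι ι ℝ)).trace

/-- Trace inner product `⟨M, N⟩ = tr(MᵀN) = Σ M_{xy} N_{xy}` of real matrices. -/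
noncomputable def matInner {α β : Type*} [Fintype α] [Fintype β]
    (M N : Matrix α β ℝ) : ℝ :=
  ∑ x, ∑ y, M x y * N x y

/-- The block-diagonal matrix `𝔻₀(w)` with `k`-th block
`(wᵀ((c_i c_jᵀ) ⊗ (d_k d_kᵀ))w)_{ij}`. -/
noncomputable def D0 {n m : ℕ} (c : Fin n → Fin n → ℝ) (d : Fin m → Fin m → ℝ)
    (w : Fin n × Fin m → ℝ) :
    Matrix (Fin n × Fin m) (Fin n × Fin m) ℝ :=
  Matrix.blockDiagonal fun k => Matrix.of fun i j =>
    w ⬝ᵥ ((Matrix.vecMulVec (c i) (c j) ⊗ₖ Matrix.vecMulVec (d k) (d k)).mulVec w)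

/-!
For `𝕄 = Σₖ ℍ₀⁽ᵏ⁾ ⊗ dₖdₖᵀ`, bilinearity gives
`wᵀ𝕄w = Σₖ Σᵢⱼ Ũ⁽ᵏ⁾ᵢⱼ · wᵀ((cᵢcⱼᵀ) ⊗ (dₖdₖᵀ))w = ⟨Ũ, 𝔻₀(w)⟩`, the terms `i = j` being harmless
because `Ũ` has zero diagonal. As `𝕄` is symmetric, its spectral norm is the supremum of the
quadratic form `|wᵀ𝕄w|` over the unit sphere, which is the equality.

For the inequality, `wᵀ((cᵢcⱼᵀ) ⊗ (dₖdₖᵀ))w = (wᵀ(cᵢ ⊗ dₖ))(wᵀ(cⱼ ⊗ dₖ))`, so `𝔻₀(w)` is a sum of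
rank-one positive semidefinite matrices `aₖaₖᵀ`. Its nuclear norm is therefore its trace, and
`|⟨U, Σₖ aₖaₖᵀ⟩| ≤ Σₖ |aₖᵀUaₖ| ≤ ‖U‖₂ Σₖ ‖aₖ‖² = ‖U‖₂ tr 𝔻₀(w)`.
-/

open scoped RealInnerProductSpace

section MatrixNorms

variable {ι κ : Type*} [Fintype ι] [Fintype κ]

lemma e2_eq_norm_toLp (v : ι → ℝ) : e2 v = ‖WithLp.toLp 2 v‖ := by
  simp [e2, EuclideanSpace.norm_eq]

lemma opNorm_nonneg (M : Matrix κ ι ℝ) : 0 ≤ opNorm M :=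
  Real.sSup_nonneg fun _ ⟨_, _, hr⟩ => hr ▸ Real.sqrt_nonneg _

lemma opNorm_eq_norm_toEuclideanCLM [DecidableEq ι] (M : Matrix ι ι ℝ) :
    opNorm M = ‖Matrix.toEuclideanCLM (𝕜 := ℝ) M‖ := by
  rw [← ContinuousLinearMap.sSup_unitClosedBall_eq_norm, opNorm]
  congr 1
  ext r
  constructor
  · rintro ⟨q, hq, rfl⟩
    refine ⟨WithLp.toLp 2 q, ?_, ?_⟩
    · rwa [Metric.mem_closedBall, dist_zero_right, ← e2_eq_norm_toLp]
    · simp only [Matrix.toEuclideanCLM_toLp, e2_eq_norm_toLp]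
  · rintro ⟨x, hx, rfl⟩
    refine ⟨x.ofLp, ?_, ?_⟩
    · rwa [e2_eq_norm_toLp, WithLp.toLp_ofLp, ← dist_zero_right, ← Metric.mem_closedBall]
    · rw [e2_eq_norm_toLp, ← Matrix.toEuclideanCLM_toLp, WithLp.toLp_ofLp]

theorem ContinuousLinearMap.norm_eq_sSup_abs_inner_self {E : Type*} [NormedAddCommGroup E]
    [InnerProductSpace ℝ E] {T : E →L[ℝ] E} (hT : (T : E →ₗ[ℝ] E).IsSymmetric) :
    ‖T‖ = sSup {r | ∃ x : E, ‖x‖ = 1 ∧ r = |⟪T x, x⟫|} := by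
  set S := {r | ∃ x : E, ‖x‖ = 1 ∧ r = |⟪T x, x⟫|}
  have rayleigh_of_norm_one {x : E} (hx : ‖x‖ = 1) : T.rayleighQuotient x = ⟪T x, x⟫ := by
    rw [rayleighQuotient, hx, one_pow, div_one, reApplyInnerSelf_apply, RCLike.re_to_real]
  have bound : ‖T‖ ∈ upperBounds S := by
    rintro _ ⟨x, hx, rfl⟩
    simpa [rayleigh_of_norm_one hx] using T.rayleighQuotient_le_norm x
  refine le_antisymm ?_ (Real.sSup_le bound (norm_nonneg T))
  rw [T.norm_eq_iSup_rayleighQuotient hT]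
  refine ciSup_le fun x => ?_
  rcases eq_or_ne x 0 with rfl | hx
  · rw [rayleighQuotient_apply_zero, abs_zero]
    exact Real.sSup_nonneg (by rintro _ ⟨_, _, rfl⟩; exact abs_nonneg _)
  · have hu : ‖(‖x‖⁻¹ : ℝ) • x‖ = 1 := norm_smul_inv_norm hx
    rw [← T.rayleigh_smul x (inv_ne_zero (norm_ne_zero_iff.mpr hx))]
    exact le_csSup ⟨‖T‖, bound⟩ ⟨_, hu, by rw [rayleigh_of_norm_one hu]⟩

lemma matInner_sum_right {τ : Type*} [Fintype τ] (U : Matrix ι ι ℝ) (D : τ → Matrix ι ι ℝ) :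
    matInner U (∑ t, D t) = ∑ t, matInner U (D t) := by
  simp only [matInner, Matrix.sum_apply, Finset.mul_sum]
  exact (Finset.sum_congr rfl fun _ _ => Finset.sum_comm).trans Finset.sum_comm

lemma matInner_vecMulVec (U : Matrix ι ι ℝ) (a b : ι → ℝ) :
    matInner U (vecMulVec a b) = a ⬝ᵥ U *ᵥ b := by
  simp only [matInner, vecMulVec_apply, dotProduct, mulVec, Finset.mul_sum]
  exact Finset.sum_congr rfl fun _ _ => Finset.sum_congr rfl fun _ _ => by ring

lemma e2_sq (v : ι → ℝ) : e2 v ^ 2 = v ⬝ᵥ v := by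
  rw [e2, Real.sq_sqrt (by positivity)]
  simp [dotProduct, sq]

lemma matInner_blockDiagonal {o : Type*} [Fintype o] [DecidableEq o] (U V : o → Matrix ι ι ℝ) :
    matInner (blockDiagonal U) (blockDiagonal V) = ∑ k, matInner (U k) (V k) := by
  simp only [matInner, Fintype.sum_prod_type, blockDiagonal_apply, ite_zero_mul_ite_zero, and_self,
    Finset.sum_ite_eq, Finset.mem_univ, if_true]
  exact Finset.sum_comm

variable [DecidableEq ι]

lemma Matrix.IsSymm.opNorm_eq_sSup {M : Matrix ι ι ℝ} (hM : M.IsSymm) :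
    opNorm M = sSup {r | ∃ w : ι → ℝ, e2 w = 1 ∧ r = |w ⬝ᵥ M *ᵥ w|} := by
  have hT : (Matrix.toEuclideanCLM (𝕜 := ℝ) M :
      EuclideanSpace ℝ ι →ₗ[ℝ] EuclideanSpace ℝ ι).IsSymmetric := by
    rwa [Matrix.coe_toEuclideanCLM_eq_toEuclideanLin, Matrix.isSymmetric_toEuclideanLin_iff,
      Matrix.isHermitian_iff_isSymm]
  rw [opNorm_eq_norm_toEuclideanCLM, ContinuousLinearMap.norm_eq_sSup_abs_inner_self hT]
  congr 1
  ext r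
  constructor
  · rintro ⟨x, hx, rfl⟩
    refine ⟨x.ofLp, by rwa [e2_eq_norm_toLp, WithLp.toLp_ofLp], ?_⟩
    rw [real_inner_comm, Matrix.inner_toEuclideanCLM]
  · rintro ⟨w, hw, rfl⟩
    refine ⟨WithLp.toLp 2 w, by rwa [← e2_eq_norm_toLp], ?_⟩
    rw [real_inner_comm, Matrix.inner_toEuclideanCLM]

lemma abs_dotProduct_mulVec_self_le (M : Matrix ι ι ℝ) (v : ι → ℝ) :
    |v ⬝ᵥ M *ᵥ v| ≤ opNorm M * e2 v ^ 2 := by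
  set x : EuclideanSpace ℝ ι := WithLp.toLp 2 v
  have hx : v ⬝ᵥ M *ᵥ v = ⟪x, Matrix.toEuclideanCLM (𝕜 := ℝ) M x⟫ :=
    (Matrix.inner_toEuclideanCLM M x x).symm
  rw [hx, opNorm_eq_norm_toEuclideanCLM, e2_eq_norm_toLp, sq, ← mul_assoc]
  calc |⟪x, Matrix.toEuclideanCLM (𝕜 := ℝ) M x⟫|
      ≤ ‖x‖ * ‖Matrix.toEuclideanCLM (𝕜 := ℝ) M x‖ := abs_real_inner_le_norm _ _
    _ ≤ ‖x‖ * (‖Matrix.toEuclideanCLM (𝕜 := ℝ) M‖ * ‖x‖) := by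
        gcongr
        exact ContinuousLinearMap.le_opNorm _ _
    _ = _ := by ring

lemma matInner_one_left (D : Matrix ι ι ℝ) : matInner 1 D = D.trace := by
  simp [matInner, Matrix.one_apply, Matrix.trace]

lemma abs_matInner_le_opNorm_mul_trace (U : Matrix ι ι ℝ) {D : Matrix ι ι ℝ}
    (hD : D.PosSemidef) : |matInner U D| ≤ opNorm U * D.trace := by
  obtain ⟨r, v, rfl⟩ := Matrix.posSemidef_iff_eq_sum_vecMulVec.mp hD
  simp only [star_trivial, matInner_sum_right, matInner_vecMulVec, Matrix.trace_sum,
    Matrix.trace_vecMulVec, ← e2_sq, Finset.mul_sum]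
  exact (Finset.abs_sum_le_sum_abs _ _).trans
    (Finset.sum_le_sum fun i _ => abs_dotProduct_mulVec_self_le U (v i))

open scoped MatrixOrder in
lemma nucNorm_eq_trace_of_posSemidef {D : Matrix ι ι ℝ} (hD : D.PosSemidef) :
    nucNorm D = D.trace := by
  have e : nucNorm D = (cfc Real.sqrt (Dᴴ * D)).trace := by
    rw [(Matrix.posSemidef_conjTranspose_mul_self D).1.cfc_eq]; rfl
  rw [e, hD.1, ← cfcₙ_eq_cfc, ← CFC.sqrt_eq_real_sqrt (D * D)
    (hD.1 ▸ Matrix.posSemidef_conjTranspose_mul_self D).nonneg, CFC.sqrt_mul_self D hD.nonneg]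

end MatrixNorms

lemma Matrix.sum_kronecker {τ l m n p α : Type*} [NonUnitalNonAssocSemiring α] (s : Finset τ)
    (A : τ → Matrix l m α) (B : Matrix n p α) : (∑ t ∈ s, A t) ⊗ₖ B = ∑ t ∈ s, A t ⊗ₖ B := by
  ext
  simp [Matrix.sum_apply, Finset.sum_mul]

lemma Matrix.vecMulVec_kronecker_vecMulVec {ι κ α : Type*} [CommSemiring α] (u v : ι → α)
    (s t : κ → α) : vecMulVec u v ⊗ₖ vecMulVec s t =
      vecMulVec (Function.uncurry (vecMulVec u s)) (Function.uncurry (vecMulVec v t)) := by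
  ext ⟨i, k⟩ ⟨j, l⟩
  simp only [kronecker_apply, vecMulVec_apply, Function.uncurry]
  ring

lemma dotProduct_vecMulVec_mulVec {ι : Type*} [Fintype ι] (w a b : ι → ℝ) :
    w ⬝ᵥ vecMulVec a b *ᵥ w = (w ⬝ᵥ a) * (w ⬝ᵥ b) := by
  rw [vecMulVec_mulVec, op_smul_eq_smul, dotProduct_smul, smul_eq_mul, dotProduct_comm b, mul_comm]

lemma isSymm_sum_smul_vecMulVec {ι κ : Type*} [Fintype ι] {U : Matrix ι ι ℝ} (hU : U.IsSymm)
    (c : ι → κ → ℝ) : (∑ i, ∑ j, U i j • vecMulVec (c i) (c j)).IsSymm := by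
  simp only [IsSymm, transpose_sum, transpose_smul, transpose_vecMulVec]
  rw [Finset.sum_comm]
  simp_rw [hU.apply]

section Chaos

variable {n m : ℕ} (c : Fin n → Fin n → ℝ) (d : Fin m → Fin m → ℝ)

def chaosMatrix (U : Fin m → Matrix (Fin n) (Fin n) ℝ) :
    Matrix (Fin n × Fin m) (Fin n × Fin m) ℝ :=
  ∑ k, (∑ i, ∑ j, U k i j • vecMulVec (c i) (c j)) ⊗ₖ vecMulVec (d k) (d k)

lemma offDiag_sum_kronecker_eq_chaosMatrix {U : Fin m → Matrix (Fin n) (Fin n) ℝ}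
    (hU : ∀ k i, U k i i = 0) :
    ∑ k, (∑ i, ∑ j, (if i = j then 0 else U k i j) • vecMulVec (c i) (c j)) ⊗ₖ
      vecMulVec (d k) (d k) = chaosMatrix c d U := by
  have hoff (k i j) : (if i = j then 0 else U k i j) = U k i j := by
    split_ifs with h
    · rw [h, hU]
    · rfl
  simp only [hoff, chaosMatrix]

lemma chaosMatrix_isSymm {U : Fin m → Matrix (Fin n) (Fin n) ℝ} (hU : ∀ k, (U k).IsSymm) :
    (chaosMatrix c d U).IsSymm := by
  simp only [chaosMatrix, IsSymm, transpose_sum, ← kroneckerMap_transpose,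
    (isSymm_sum_smul_vecMulVec (hU _) c).eq, transpose_vecMulVec]

lemma matInner_blockDiagonal_D0 (U : Fin m → Matrix (Fin n) (Fin n) ℝ) (w : Fin n × Fin m → ℝ) :
    matInner (blockDiagonal U) (D0 c d w) = w ⬝ᵥ chaosMatrix c d U *ᵥ w := by
  rw [D0, matInner_blockDiagonal]
  simp only [chaosMatrix, matInner, of_apply, Matrix.sum_kronecker,
    smul_kronecker, sum_mulVec, dotProduct_sum, smul_mulVec, dotProduct_smul, smul_eq_mul]

def blockFactor (w : Fin n × Fin m → ℝ) (k : Fin m) : Fin n × Fin m → ℝ :=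
  fun p => if p.2 = k then w ⬝ᵥ Function.uncurry (vecMulVec (c p.1) (d k)) else 0

lemma D0_eq_sum_vecMulVec (w : Fin n × Fin m → ℝ) :
    D0 c d w = ∑ k, vecMulVec (blockFactor c d w k) (blockFactor c d w k) := by
  ext ⟨i, k⟩ ⟨j, l⟩
  simp only [D0, Matrix.vecMulVec_kronecker_vecMulVec, dotProduct_vecMulVec_mulVec,
    blockDiagonal_apply, of_apply, Matrix.sum_apply, vecMulVec_apply, blockFactor, mul_ite, ite_mul,
    zero_mul, mul_zero, Finset.sum_ite_eq, Finset.mem_univ, if_true]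
  split_ifs with h <;> simp [h]

lemma posSemidef_D0 (w : Fin n × Fin m → ℝ) : (D0 c d w).PosSemidef := by
  rw [D0_eq_sum_vecMulVec]
  exact posSemidef_sum _ fun k _ => by
    simpa using posSemidef_vecMulVec_self_star (blockFactor c d w k)

lemma abs_matInner_D0_le (U : Matrix (Fin n × Fin m) (Fin n × Fin m) ℝ) (w : Fin n × Fin m → ℝ) :
    |matInner U (D0 c d w)| ≤ opNorm U * nucNorm (D0 c d w) := by
  rw [nucNorm_eq_trace_of_posSemidef (posSemidef_D0 c d w)]
  exact abs_matInner_le_opNorm_mul_trace U (posSemidef_D0 c d w)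

lemma nucNorm_D0_nonneg (w : Fin n × Fin m → ℝ) : 0 ≤ nucNorm (D0 c d w) := by
  rw [nucNorm_eq_trace_of_posSemidef (posSemidef_D0 c d w)]
  exact (posSemidef_D0 c d w).trace_nonneg

-- `tr 𝔻₀(w) = ⟨I, 𝔻₀(w)⟩` is itself a quadratic form in `w`.
lemma nucNorm_D0_le {w : Fin n × Fin m → ℝ} (hw : e2 w = 1) :
    nucNorm (D0 c d w) ≤ opNorm (chaosMatrix c d 1) := by
  rw [nucNorm_eq_trace_of_posSemidef (posSemidef_D0 c d w), ← matInner_one_left,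
    ← blockDiagonal_one, matInner_blockDiagonal_D0]
  simpa [hw] using (le_abs_self _).trans (abs_dotProduct_mulVec_self_le (chaosMatrix c d 1) w)

end Chaos

theorem chaos_operator_norm_general
    (n m : ℕ)
    (c : Fin n → Fin n → ℝ) (d : Fin m → Fin m → ℝ)
    (Ut : Fin m → Matrix (Fin n) (Fin n) ℝ)
    (hsymm : ∀ k, (Ut k).IsSymm)
    (hdiag : ∀ k i, Ut k i i = 0) :
    opNorm (∑ k, (∑ i, ∑ j, (if i = j then 0 else Ut k i j) •
        Matrix.vecMulVec (c i) (c j)) ⊗ₖ Matrix.vecMulVec (d k) (d k)) =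
      sSup {x : ℝ | ∃ w : Fin n × Fin m → ℝ, e2 w = 1 ∧
        x = |matInner (Matrix.blockDiagonal Ut) (D0 c d w)|} ∧
    sSup {x : ℝ | ∃ w : Fin n × Fin m → ℝ, e2 w = 1 ∧
        x = |matInner (Matrix.blockDiagonal Ut) (D0 c d w)|} ≤
      opNorm (Matrix.blockDiagonal Ut) *
        sSup {x : ℝ | ∃ w : Fin n × Fin m → ℝ, e2 w = 1 ∧ x = nucNorm (D0 c d w)} := by
  have hnuc_bdd : BddAbove {x : ℝ | ∃ w : Fin n × Fin m → ℝ, e2 w = 1 ∧ x = nucNorm (D0 c d w)} :=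
    ⟨opNorm (chaosMatrix c d 1), by rintro _ ⟨w, hw, rfl⟩; exact nucNorm_D0_le c d hw⟩
  constructor
  · rw [offDiag_sum_kronecker_eq_chaosMatrix c d hdiag,
      (chaosMatrix_isSymm c d hsymm).opNorm_eq_sSup]
    simp only [matInner_blockDiagonal_D0]
  · refine Real.sSup_le ?_ (mul_nonneg (opNorm_nonneg _)
      (Real.sSup_nonneg (by rintro _ ⟨w, -, rfl⟩; exact nucNorm_D0_nonneg c d w)))
    rintro _ ⟨w, hw, rfl⟩
    exact (abs_matInner_D0_le c d _ w).trans
      (mul_le_mul_of_nonneg_left (le_csSup hnuc_bdd ⟨w, hw, rfl⟩) (opNorm_nonneg _))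

/-- Lemma: operator norm of sums of tensor products via block
diagonal matrices and the nuclear norm. -/
theorem chaos_operator_norm
    (n m : ℕ) (hn : 0 < n) (hm : 0 < m)
    (c : Fin n → Fin n → ℝ) (d : Fin m → Fin m → ℝ)
    (Ut : Fin m → Matrix (Fin n) (Fin n) ℝ)
    (hsymm : ∀ k, (Ut k).IsSymm)
    (hdiag : ∀ k i, Ut k i i = 0) :
    opNorm (∑ k, (∑ i, ∑ j, (if i = j then 0 else Ut k i j) •
        Matrix.vecMulVec (c i) (c j)) ⊗ₖ Matrix.vecMulVec (d k) (d k)) =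
      sSup {x : ℝ | ∃ w : Fin n × Fin m → ℝ, e2 w = 1 ∧
        x = |matInner (Matrix.blockDiagonal Ut) (D0 c d w)|} ∧
    sSup {x : ℝ | ∃ w : Fin n × Fin m → ℝ, e2 w = 1 ∧
        x = |matInner (Matrix.blockDiagonal Ut) (D0 c d w)|} ≤
      opNorm (Matrix.blockDiagonal Ut) *
        sSup {x : ℝ | ∃ w : Fin n × Fin m → ℝ, e2 w = 1 ∧ x = nucNorm (D0 c d w)} :=
  chaos_operator_norm_general n m c d Ut hsymm hdiag
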